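/- arXiv:0811.4413 — 7 statements merged into one kernel-verified Lean document; each statement's English description precedes it below -/
import Mathlib

section
/- If π > 0 entrywise and O ∈ R^{n×m} and T ∈ R^{m×m} both have rank m (with m ≤ n), then rank(P_{2,1}) = m, and if U ∈ R^{n×m} is the matrix of left singular vectors of P_{2,1} corresponding to its m nonzero singular values, then range(U) = range(O); in particular U^T O is invertible. -/
/-!
Since `O` has rank `m`, `Oᵀ` is surjective, and so are `diag(π)` (as `π > 0`) and `T`.
Multiplying on the right by a surjective matrix does not change the column space, so
`range P₂₁ = range O`, which gives the rank. As `range U = range O` and `Uᵀ U = 1`,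
`Uᵀ O` has the same column space as `Uᵀ U = 1`, so the square matrix `Uᵀ O` is surjective,
hence invertible.
-/

open Matrix

namespace Matrix

variable {K : Type*} [Field K] {l m n : Type*} [Fintype m] [Fintype n]

theorem range_mulVecLin_eq_top_of_rank_eq {A : Matrix m n K} (hA : A.rank = Fintype.card m) :
    LinearMap.range A.mulVecLin = ⊤ :=
  Submodule.eq_top_of_finrank_eq (by rw [Module.finrank_fintype_fun_eq_card]; exact hA)

theorem range_mulVecLin_mul_of_range_eq_top (A : Matrix l m K) {B : Matrix m n K}
    (hB : LinearMap.range B.mulVecLin = ⊤) :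
    LinearMap.range (A * B).mulVecLin = LinearMap.range A.mulVecLin := by
  rw [mulVecLin_mul, LinearMap.range_comp, hB, Submodule.map_top]

theorem range_mulVecLin_mul_congr_right (A : Matrix l m K) {B C : Matrix m n K}
    (h : LinearMap.range B.mulVecLin = LinearMap.range C.mulVecLin) :
    LinearMap.range (A * B).mulVecLin = LinearMap.range (A * C).mulVecLin := by
  rw [mulVecLin_mul, mulVecLin_mul, LinearMap.range_comp, LinearMap.range_comp, h]

theorem isUnit_mul_of_mul_eq_one_of_range_eq [DecidableEq n] {L : Matrix n m K}
    {U O : Matrix m n K} (hLU : L * U = 1)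
    (h : LinearMap.range U.mulVecLin = LinearMap.range O.mulVecLin) : IsUnit (L * O) := by
  have hrange : LinearMap.range (L * O).mulVecLin = ⊤ := by
    rw [← range_mulVecLin_mul_congr_right L h, hLU, mulVecLin_one, LinearMap.range_id]
  exact mulVec_surjective_iff_isUnit.mp (LinearMap.range_eq_top.mp hrange)

end Matrix

theorem hmm_svd_U_range_general (m n : ℕ)
    (T : Matrix (Fin m) (Fin m) ℝ) (O : Matrix (Fin n) (Fin m) ℝ) (π : Fin m → ℝ)
    (hπ : ∀ i, 0 < π i) (hO : O.rank = m) (hT : T.rank = m)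
    (P21 : Matrix (Fin n) (Fin n) ℝ) (hP21 : P21 = O * T * Matrix.diagonal π * Oᵀ)
    (U : Matrix (Fin n) (Fin m) ℝ)
    (hUorth : Uᵀ * U = 1)
    (hUspan : LinearMap.range U.mulVecLin = LinearMap.range P21.mulVecLin) :
    P21.rank = m ∧
    LinearMap.range U.mulVecLin = LinearMap.range O.mulVecLin ∧
    IsUnit (Uᵀ * O) := by
  have hOt_top : LinearMap.range Oᵀ.mulVecLin = ⊤ :=
    range_mulVecLin_eq_top_of_rank_eq (by rw [rank_transpose, hO, Fintype.card_fin])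
  have hD_top : LinearMap.range (diagonal π).mulVecLin = ⊤ := by
    refine LinearMap.range_eq_top.mpr (mulVec_surjective_iff_isUnit.mpr ?_)
    exact isUnit_diagonal.mpr (Pi.isUnit_iff.mpr fun i => (hπ i).ne'.isUnit)
  have hT_top : LinearMap.range T.mulVecLin = ⊤ :=
    range_mulVecLin_eq_top_of_rank_eq (by rw [hT, Fintype.card_fin])
  have hrange : LinearMap.range P21.mulVecLin = LinearMap.range O.mulVecLin := by
    rw [hP21, range_mulVecLin_mul_of_range_eq_top _ hOt_top,
      range_mulVecLin_mul_of_range_eq_top _ hD_top, range_mulVecLin_mul_of_range_eq_top _ hT_top]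
  have hUO : LinearMap.range U.mulVecLin = LinearMap.range O.mulVecLin := hUspan.trans hrange
  refine ⟨?_, hUO, isUnit_mul_of_mul_eq_one_of_range_eq hUorth hUO⟩
  rw [rank, hrange, ← rank, hO]

/-- if `π > 0` entrywise and `O`, `T` have rank `m` (with `m ≤ n`), then
`P_{2,1} = O T diag(π) Oᵀ` has rank `m`; and if `U` is the `n × m` matrix of left singular
vectors of `P_{2,1}` corresponding to its `m` nonzero singular values (equivalently, `U` has
orthonormal columns spanning the column space of `P_{2,1}`), then
`range(U) = range(O)`, and in particular `Uᵀ O` is invertible. -/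
theorem hmm_svd_U_range (m n : ℕ) (hmn : m ≤ n)
    (T : Matrix (Fin m) (Fin m) ℝ) (O : Matrix (Fin n) (Fin m) ℝ) (π : Fin m → ℝ)
    (hπ : ∀ i, 0 < π i) (hO : O.rank = m) (hT : T.rank = m)
    (P21 : Matrix (Fin n) (Fin n) ℝ) (hP21 : P21 = O * T * Matrix.diagonal π * Oᵀ)
    (U : Matrix (Fin n) (Fin m) ℝ)
    (hUorth : Uᵀ * U = 1)
    (hUspan : LinearMap.range U.mulVecLin = LinearMap.range P21.mulVecLin) :
    P21.rank = m ∧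
    LinearMap.range U.mulVecLin = LinearMap.range O.mulVecLin ∧
    IsUnit (Uᵀ * O) :=
  hmm_svd_U_range_general m n T O π hπ hO hT P21 hP21 U hUorth hUspan
end

section
/- Assume π > 0, rank(O) = rank(T) = m, and U^T O is invertible. For observation x, define P_{3,x,1} with [P_{3,x,1}]_{ij} = Pr[x_3=i, x_2=x, x_1=j], which satisfies P_{3,x,1} = O A_x T diag(π) O^T where A_x = T diag(O_{x,·}). Then B_x := (U^T P_{3,x,1})(U^T P_{2,1})^+ = (U^T O) A_x (U^T O)^{-1}. -/
/-!
Write `D = diag π` and `V = Uᵀ O`. Then `Uᵀ P_{2,1} = (V T D) Oᵀ` with `V T D` invertible, so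
`Uᵀ P_{2,1}` has full row rank `m`. A full-row-rank matrix `M` has a right inverse `B`, and then
`M X M = M` forces `M X = M X (M B) = M B = 1`. Hence
`V (T D Oᵀ X) = 1`, i.e. `T D Oᵀ X = V⁻¹`, and
`B_x = Uᵀ O A_x T D Oᵀ X = V A_x V⁻¹`.
-/

open Matrix

namespace Matrix

variable {K m n : Type*} [Field K] [Fintype m] [Fintype n]

theorem mulVec_surjective_of_rank_eq_card {A : Matrix m n K} (h : A.rank = Fintype.card m) :
    Function.Surjective A.mulVec := by
  have hrange : LinearMap.range A.mulVecLin = ⊤ :=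
    Submodule.eq_top_of_finrank_eq (by rw [← Matrix.rank, h, Module.finrank_fintype_fun_eq_card])
  exact LinearMap.range_eq_top.mp hrange

theorem isUnit_of_rank_eq_card [DecidableEq m] {A : Matrix m m K} (h : A.rank = Fintype.card m) : IsUnit A :=
  mulVec_surjective_iff_isUnit.mp (mulVec_surjective_of_rank_eq_card h)

theorem mul_eq_one_of_mul_mul_eq_self_of_rank_eq_card [DecidableEq m] {A : Matrix m n K} {X : Matrix n m K}
    (h : A.rank = Fintype.card m) (hX : A * X * A = A) : A * X = 1 := by
  obtain ⟨B, hB⟩ := mulVec_surjective_iff_exists_right_inverse.mp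
    (mulVec_surjective_of_rank_eq_card h)
  calc A * X = A * X * (A * B) := by rw [hB, Matrix.mul_one]
    _ = A * B := by rw [← Matrix.mul_assoc, hX]
    _ = 1 := hB

end Matrix

theorem hmm_Bx_formula_general (m n : ℕ)
    (T : Matrix (Fin m) (Fin m) ℝ) (O : Matrix (Fin n) (Fin m) ℝ) (π : Fin m → ℝ)
    (hπ : ∀ i, 0 < π i) (hO : O.rank = m) (hT : T.rank = m)
    (U : Matrix (Fin n) (Fin m) ℝ) (hU : IsUnit (Uᵀ * O))
    (Ax : Matrix (Fin m) (Fin m) ℝ)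
    (P21 : Matrix (Fin n) (Fin n) ℝ) (hP21 : P21 = O * T * Matrix.diagonal π * Oᵀ)
    (P3x1 : Matrix (Fin n) (Fin n) ℝ) (hP3x1 : P3x1 = O * Ax * T * Matrix.diagonal π * Oᵀ)
    (M : Matrix (Fin m) (Fin n) ℝ) (hM : M = Uᵀ * P21)
    (X : Matrix (Fin n) (Fin m) ℝ)
    (hX1 : M * X * M = M)
    (Bx : Matrix (Fin m) (Fin m) ℝ) (hBx : Bx = (Uᵀ * P3x1) * X) :
    Bx = (Uᵀ * O) * Ax * (Uᵀ * O)⁻¹ := by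
  have hD : IsUnit (diagonal π) :=
    isUnit_diagonal.mpr (Pi.isUnit_iff.mpr fun i => (hπ i).ne'.isUnit)
  have hTunit : IsUnit T := isUnit_of_rank_eq_card (by rw [hT, Fintype.card_fin])
  have hMfactor : M = (Uᵀ * O * T * diagonal π) * Oᵀ := by
    simp only [hM, hP21, Matrix.mul_assoc]
  have hMrank : M.rank = Fintype.card (Fin m) := by
    rw [hMfactor, rank_mul_eq_right_of_isUnit_det _ _
      ((isUnit_iff_isUnit_det _).mp ((hU.mul hTunit).mul hD)), rank_transpose, hO,
      Fintype.card_fin]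
  have hMX : M * X = 1 := mul_eq_one_of_mul_mul_eq_self_of_rank_eq_card hMrank hX1
  have hinv : T * diagonal π * Oᵀ * X = (Uᵀ * O)⁻¹ := by
    refine (inv_eq_right_inv ?_).symm
    rw [← hMX, hMfactor]
    simp only [Matrix.mul_assoc]
  calc Bx = Uᵀ * O * Ax * (T * diagonal π * Oᵀ * X) := by
        simp only [hBx, hP3x1, Matrix.mul_assoc]
    _ = Uᵀ * O * Ax * (Uᵀ * O)⁻¹ := by rw [hinv]

/-- with `π > 0`, `rank O = rank T = m`, and `Uᵀ O` invertible, the observable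
operator `B_x = (Uᵀ P_{3,x,1})(Uᵀ P_{2,1})⁺` satisfies `B_x = (Uᵀ O) A_x (Uᵀ O)⁻¹`,
where `A_x = T diag(O_{x,·})`, `P_{3,x,1} = O A_x T diag(π) Oᵀ`, and `(Uᵀ P_{2,1})⁺` is
the Moore–Penrose pseudoinverse, characterized by the four Penrose conditions. -/
theorem hmm_Bx_formula (m n : ℕ)
    (T : Matrix (Fin m) (Fin m) ℝ) (O : Matrix (Fin n) (Fin m) ℝ) (π : Fin m → ℝ)
    (hπ : ∀ i, 0 < π i) (hO : O.rank = m) (hT : T.rank = m)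
    (U : Matrix (Fin n) (Fin m) ℝ) (hU : IsUnit (Uᵀ * O))
    (x : Fin n)
    (Ax : Matrix (Fin m) (Fin m) ℝ) (hAx : Ax = T * Matrix.diagonal (fun i => O x i))
    (P21 : Matrix (Fin n) (Fin n) ℝ) (hP21 : P21 = O * T * Matrix.diagonal π * Oᵀ)
    (P3x1 : Matrix (Fin n) (Fin n) ℝ) (hP3x1 : P3x1 = O * Ax * T * Matrix.diagonal π * Oᵀ)
    (M : Matrix (Fin m) (Fin n) ℝ) (hM : M = Uᵀ * P21)
    (X : Matrix (Fin n) (Fin m) ℝ)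
    (hX1 : M * X * M = M) (hX2 : X * M * X = X)
    (hX3 : (M * X)ᵀ = M * X) (hX4 : (X * M)ᵀ = X * M)
    (Bx : Matrix (Fin m) (Fin m) ℝ) (hBx : Bx = (Uᵀ * P3x1) * X) :
    Bx = (Uᵀ * O) * Ax * (Uᵀ * O)⁻¹ :=
  hmm_Bx_formula_general m n T O π hπ hO hT U hU Ax P21 hP21 P3x1 hP3x1 M hM X hX1 Bx hBx
end

section
/- Assume π > 0, rank(O) = rank(T) = m, and U^T O is invertible. With b_1 = (U^T O)π, b_∞^T = 1_m^T (U^T O)^{-1}, and B_x = (U^T O) A_x (U^T O)^{-1}, for any t ≥ 1 and observations x_1,…,x_t: Pr[x_1,…,x_t] = b_∞^T B_{x_t} ⋯ B_{x_1} b_1. -/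
open Matrix

section Conjugation

variable {ι n R : Type*} [Fintype n] [DecidableEq n] [CommRing R]

lemma Matrix.list_prod_map_conj {M : Matrix n n R} (hM : IsUnit M) (f : ι → Matrix n n R)
    (l : List ι) : (l.map fun a => M * f a * M⁻¹).prod = M * (l.map f).prod * M⁻¹ := by
  have hdet : IsUnit M.det := (isUnit_iff_isUnit_det M).mp hM
  induction l with
  | nil => simp [mul_nonsing_inv M hdet]
  | cons a l ih =>
    rw [List.map_cons, List.prod_cons, ih, List.map_cons, List.prod_cons]
    simp only [Matrix.mul_assoc, nonsing_inv_mul_cancel_left M _ hdet]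

lemma Matrix.vecMul_nonsing_inv_dotProduct_conj_mulVec {M : Matrix n n R} (hM : IsUnit M)
    (P : Matrix n n R) (v w : n → R) :
    vecMul v M⁻¹ ⬝ᵥ (M * P * M⁻¹) *ᵥ (M *ᵥ w) = v ⬝ᵥ P *ᵥ w := by
  have hdet : IsUnit M.det := (isUnit_iff_isUnit_det M).mp hM
  rw [mulVec_mulVec, Matrix.mul_assoc, nonsing_inv_mul M hdet, Matrix.mul_one, ← mulVec_mulVec,
    dotProduct_mulVec, vecMul_vecMul, nonsing_inv_mul M hdet, vecMul_one]

end Conjugation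

theorem hmm_joint_prob_observable_rep_general (m n t : ℕ)
    (O : Matrix (Fin n) (Fin m) ℝ) (π : Fin m → ℝ)
    (U : Matrix (Fin n) (Fin m) ℝ) (hU : IsUnit (Uᵀ * O))
    (A B : Fin n → Matrix (Fin m) (Fin m) ℝ)
    (hB : ∀ x, B x = (Uᵀ * O) * A x * (Uᵀ * O)⁻¹)
    (b1 : Fin m → ℝ) (hb1 : b1 = (Uᵀ * O).mulVec π)
    (binf : Fin m → ℝ) (hbinf : binf = Matrix.vecMul (fun _ => (1 : ℝ)) (Uᵀ * O)⁻¹)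
    (x : Fin (t + 1) → Fin n) :
    dotProduct binf ((((List.ofFn x).reverse.map B).prod).mulVec b1)
      = dotProduct (fun _ => (1 : ℝ)) ((((List.ofFn x).reverse.map A).prod).mulVec π) := by
  obtain rfl : B = fun x => (Uᵀ * O) * A x * (Uᵀ * O)⁻¹ := funext hB
  rw [list_prod_map_conj hU, hb1, hbinf, vecMul_nonsing_inv_dotProduct_conj_mulVec hU]

/-- with `π > 0`, `rank O = rank T = m`, and `Uᵀ O` invertible, and the
observable parameters `b_1 = (Uᵀ O) π`, `b_∞ᵀ = 1ₘᵀ (Uᵀ O)⁻¹`, `B_x = (Uᵀ O) A_x (Uᵀ O)⁻¹`,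
we have for any `t ≥ 1` and observations `x_1, …, x_t`:
`Pr[x_1,…,x_t] = b_∞ᵀ B_{x_t} ⋯ B_{x_1} b_1`, where by the observable operator formula
`Pr[x_1,…,x_t] = 1ₘᵀ A_{x_t} ⋯ A_{x_1} π` with `A_x = T diag(O_{x,·})`. -/
theorem hmm_joint_prob_observable_rep (m n t : ℕ)
    (T : Matrix (Fin m) (Fin m) ℝ) (O : Matrix (Fin n) (Fin m) ℝ) (π : Fin m → ℝ)
    (hπ : ∀ i, 0 < π i) (hO : O.rank = m) (hT : T.rank = m)
    (U : Matrix (Fin n) (Fin m) ℝ) (hU : IsUnit (Uᵀ * O))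
    (A B : Fin n → Matrix (Fin m) (Fin m) ℝ)
    (hA : ∀ x, A x = T * Matrix.diagonal (fun i => O x i))
    (hB : ∀ x, B x = (Uᵀ * O) * A x * (Uᵀ * O)⁻¹)
    (b1 : Fin m → ℝ) (hb1 : b1 = (Uᵀ * O).mulVec π)
    (binf : Fin m → ℝ) (hbinf : binf = Matrix.vecMul (fun _ => (1 : ℝ)) (Uᵀ * O)⁻¹)
    (x : Fin (t + 1) → Fin n) :
    dotProduct binf ((((List.ofFn x).reverse.map B).prod).mulVec b1)
      = dotProduct (fun _ => (1 : ℝ)) ((((List.ofFn x).reverse.map A).prod).mulVec π) :=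
  hmm_joint_prob_observable_rep_general m n t O π U hU A B hB b1 hb1 binf hbinf x
end

section
/- Assume π > 0, rank(O)=rank(T)=m, U^T O invertible. Define the internal state b_t(x_{1:t-1}) = B_{x_{t-1}}⋯B_{x_1} b_1 / (b_∞^T B_{x_{t-1}}⋯B_{x_1} b_1) for histories with positive probability. Then b_t = (U^T O) h_t(x_{1:t-1}), where [h_t(x_{1:t-1})]_i = Pr[h_t = i | x_1,…,x_{t-1}] is the conditional hidden-state distribution. -/
open Matrix

/-- Unnormalized forward recursion: `fwd F v x 0 = v`,
`fwd F v x (t+1) = F (x t) *ᵥ fwd F v x t`, so that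
`fwd F v x t = F_{x_{t-1}} ⋯ F_{x_0} v`. -/
def fwd {m n : ℕ} (F : Fin n → Matrix (Fin m) (Fin m) ℝ) (v : Fin m → ℝ)
    (x : ℕ → Fin n) : ℕ → (Fin m → ℝ)
  | 0 => v
  | t + 1 => (F (x t)).mulVec (fwd F v x t)

theorem fwd_mulVec_of_intertwine {m n : ℕ} {A B : Fin n → Matrix (Fin m) (Fin m) ℝ}
    {S : Matrix (Fin m) (Fin m) ℝ} (hS : ∀ y, B y * S = S * A y) (v : Fin m → ℝ)
    (x : ℕ → Fin n) (t : ℕ) : fwd B (S *ᵥ v) x t = S *ᵥ fwd A v x t := by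
  induction t with
  | zero => rfl
  | succ t ih => simp only [fwd, ih, mulVec_mulVec, hS]

theorem vecMul_nonsing_inv_dotProduct_mulVec {ι R : Type*} [Fintype ι] [DecidableEq ι]
    [CommRing R] {S : Matrix ι ι R} (hS : IsUnit S.det) (w v : ι → R) :
    (w ᵥ* S⁻¹) ⬝ᵥ (S *ᵥ v) = w ⬝ᵥ v := by
  rw [dotProduct_mulVec, vecMul_vecMul, nonsing_inv_mul S hS, vecMul_one]

theorem hmm_internal_state_relation_general (m n : ℕ)
    (O : Matrix (Fin n) (Fin m) ℝ) (π : Fin m → ℝ)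
    (U : Matrix (Fin n) (Fin m) ℝ) (hU : IsUnit (Uᵀ * O))
    (A B : Fin n → Matrix (Fin m) (Fin m) ℝ)
    (hB : ∀ y, B y = (Uᵀ * O) * A y * (Uᵀ * O)⁻¹)
    (b1 : Fin m → ℝ) (hb1 : b1 = (Uᵀ * O).mulVec π)
    (binf : Fin m → ℝ) (hbinf : binf = Matrix.vecMul (fun _ => (1 : ℝ)) (Uᵀ * O)⁻¹)
    (x : ℕ → Fin n)
    (t : ℕ) :
    (1 / dotProduct binf (fwd B b1 x t)) • fwd B b1 x t
      = (Uᵀ * O).mulVec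
          ((1 / dotProduct (fun _ => (1 : ℝ)) (fwd A π x t)) • fwd A π x t) := by
  have hdet : IsUnit (Uᵀ * O).det := (isUnit_iff_isUnit_det _).mp hU
  have hintertwine : ∀ y, B y * (Uᵀ * O) = (Uᵀ * O) * A y := fun y => by
    rw [hB, nonsing_inv_mul_cancel_right _ _ hdet]
  have hstate : fwd B b1 x t = (Uᵀ * O) *ᵥ fwd A π x t := by
    rw [hb1, fwd_mulVec_of_intertwine hintertwine]
  rw [hstate, hbinf, vecMul_nonsing_inv_dotProduct_mulVec hdet, mulVec_smul]

/-- with `π > 0`, `rank O = rank T = m`, and `Uᵀ O` invertible, the normalized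
internal state `b_t = B_{x_{t-1}} ⋯ B_{x_1} b_1 / (b_∞ᵀ B_{x_{t-1}} ⋯ B_{x_1} b_1)`
satisfies `b_t = (Uᵀ O) h_t`, where `h_t` is the conditional hidden-state distribution
`h_t = A_{x_{t-1}} ⋯ A_{x_1} π / (1ₘᵀ A_{x_{t-1}} ⋯ A_{x_1} π)`, for histories of
positive probability. -/
theorem hmm_internal_state_relation (m n : ℕ)
    (T : Matrix (Fin m) (Fin m) ℝ) (O : Matrix (Fin n) (Fin m) ℝ) (π : Fin m → ℝ)
    (hπ : ∀ i, 0 < π i) (hO : O.rank = m) (hT : T.rank = m)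
    (U : Matrix (Fin n) (Fin m) ℝ) (hU : IsUnit (Uᵀ * O))
    (A B : Fin n → Matrix (Fin m) (Fin m) ℝ)
    (hA : ∀ y, A y = T * Matrix.diagonal (fun i => O y i))
    (hB : ∀ y, B y = (Uᵀ * O) * A y * (Uᵀ * O)⁻¹)
    (b1 : Fin m → ℝ) (hb1 : b1 = (Uᵀ * O).mulVec π)
    (binf : Fin m → ℝ) (hbinf : binf = Matrix.vecMul (fun _ => (1 : ℝ)) (Uᵀ * O)⁻¹)
    (x : ℕ → Fin n)
    (hpos : ∀ t, 0 < dotProduct (fun _ => (1 : ℝ)) (fwd A π x t))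
    (t : ℕ) :
    (1 / dotProduct binf (fwd B b1 x t)) • fwd B b1 x t
      = (Uᵀ * O).mulVec
          ((1 / dotProduct (fun _ => (1 : ℝ)) (fwd A π x t)) • fwd A π x t) :=
  hmm_internal_state_relation_general m n O π U hU A B hB b1 hb1 binf hbinf x t
end

section
/- Under the observable representation, for any t with Pr[x_{1:t}] > 0, the conditional observation probability satisfies Pr[x_t | x_1,…,x_{t-1}] = b_∞^T B_{x_t} b_t. -/
open Matrix

/-!
The observable operators are the conjugates `B_y = M A_y M⁻¹` of the hidden-state operators by
`M = Uᵀ O`, and `b_1 = M π`, so the unnormalized observable state is `M` applied to the forward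
vector `A_{x_{t-1}} ⋯ A_{x_0} π`; `b_∞ᵀ = 1ᵀ M⁻¹` then cancels `M` and gives back the joint
probabilities. The normalization of `b_t` divides by `Pr[x_{1:t-1}]`, which is the denominator of
the conditional probability.
-/

theorem dotProduct_vecMul_inv_mulVec {ι R : Type*} [Fintype ι] [DecidableEq ι] [CommRing R]
    {M : Matrix ι ι R} (hM : IsUnit M) (w v : ι → R) :
    (w ᵥ* M⁻¹) ⬝ᵥ (M *ᵥ v) = w ⬝ᵥ v := by
  rw [dotProduct_mulVec, vecMul_vecMul, nonsing_inv_mul M ((isUnit_iff_isUnit_det M).mp hM),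
    vecMul_one]

theorem fwd_conj_eq_mulVec_fwd {m n : ℕ} {M : Matrix (Fin m) (Fin m) ℝ} (hM : IsUnit M)
    {A B : Fin n → Matrix (Fin m) (Fin m) ℝ} (hB : ∀ y, B y = M * A y * M⁻¹)
    (π : Fin m → ℝ) (x : ℕ → Fin n) (s : ℕ) :
    fwd B (M *ᵥ π) x s = M *ᵥ fwd A π x s := by
  induction s with
  | zero => rfl
  | succ s ih =>
    have hinv : M⁻¹ * M = 1 := nonsing_inv_mul M ((isUnit_iff_isUnit_det M).mp hM)
    simp only [fwd, ih, hB, mulVec_mulVec, Matrix.mul_assoc, hinv, Matrix.mul_one]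

theorem hmm_conditional_prob_observable_rep_general (m n : ℕ)
    (O : Matrix (Fin n) (Fin m) ℝ) (π : Fin m → ℝ)
    (U : Matrix (Fin n) (Fin m) ℝ) (hU : IsUnit (Uᵀ * O))
    (A B : Fin n → Matrix (Fin m) (Fin m) ℝ)
    (hB : ∀ y, B y = (Uᵀ * O) * A y * (Uᵀ * O)⁻¹)
    (b1 : Fin m → ℝ) (hb1 : b1 = (Uᵀ * O).mulVec π)
    (binf : Fin m → ℝ) (hbinf : binf = Matrix.vecMul (fun _ => (1 : ℝ)) (Uᵀ * O)⁻¹)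
    (x : ℕ → Fin n)
    (t : ℕ) :
    dotProduct (fun _ => (1 : ℝ)) (fwd A π x (t + 1))
        / dotProduct (fun _ => (1 : ℝ)) (fwd A π x t)
      = dotProduct binf
          ((B (x t)).mulVec ((1 / dotProduct binf (fwd B b1 x t)) • fwd B b1 x t)) := by
  subst hb1 hbinf
  have hstep : B (x t) *ᵥ fwd B ((Uᵀ * O) *ᵥ π) x t = fwd B ((Uᵀ * O) *ᵥ π) x (t + 1) := rfl
  rw [mulVec_smul, dotProduct_smul, smul_eq_mul, hstep, fwd_conj_eq_mulVec_fwd hU hB,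
    fwd_conj_eq_mulVec_fwd hU hB, dotProduct_vecMul_inv_mulVec hU,
    dotProduct_vecMul_inv_mulVec hU, one_div_mul_eq_div]

/-- under the observable representation
(`b_1 = (Uᵀ O) π`, `b_∞ᵀ = 1ₘᵀ (Uᵀ O)⁻¹`, `B_x = (Uᵀ O) A_x (Uᵀ O)⁻¹`), for any `t` with
`Pr[x_{1:t}] > 0`, the conditional probability
`Pr[x_t | x_1,…,x_{t-1}] = Pr[x_{1:t}] / Pr[x_{1:t-1}]` equals `b_∞ᵀ B_{x_t} b_t`,
where `b_t` is the normalized internal state. -/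
theorem hmm_conditional_prob_observable_rep (m n : ℕ)
    (T : Matrix (Fin m) (Fin m) ℝ) (O : Matrix (Fin n) (Fin m) ℝ) (π : Fin m → ℝ)
    (hπ : ∀ i, 0 < π i) (hO : O.rank = m) (hT : T.rank = m)
    (U : Matrix (Fin n) (Fin m) ℝ) (hU : IsUnit (Uᵀ * O))
    (A B : Fin n → Matrix (Fin m) (Fin m) ℝ)
    (hA : ∀ y, A y = T * Matrix.diagonal (fun i => O y i))
    (hB : ∀ y, B y = (Uᵀ * O) * A y * (Uᵀ * O)⁻¹)
    (b1 : Fin m → ℝ) (hb1 : b1 = (Uᵀ * O).mulVec π)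
    (binf : Fin m → ℝ) (hbinf : binf = Matrix.vecMul (fun _ => (1 : ℝ)) (Uᵀ * O)⁻¹)
    (x : ℕ → Fin n)
    (hpos : ∀ t, 0 < dotProduct (fun _ => (1 : ℝ)) (fwd A π x t))
    (t : ℕ) :
    dotProduct (fun _ => (1 : ℝ)) (fwd A π x (t + 1))
        / dotProduct (fun _ => (1 : ℝ)) (fwd A π x t)
      = dotProduct binf
          ((B (x t)).mulVec ((1 / dotProduct binf (fwd B b1 x t)) • fwd B b1 x t)) :=
  hmm_conditional_prob_observable_rep_general m n O π U hU A B hB b1 hb1 binf hbinf x t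
end

section
/- Assume Û^T O invertible. Define parameter errors Δ_x = ‖(Û^T O)^{-1} B̂_x (Û^T O) − A_x‖_1 (induced L1/max-column-sum norm), Δ = Σ_x Δ_x, and δ_1 = ‖(Û^T O)^{-1} b̂_1 − π‖_1. Then for any t ≥ 1, Σ_{x_1,…,x_t} ‖(Û^T O)^{-1}(B̂_{x_t}⋯B̂_{x_1} b̂_1 − B̃_{x_t}⋯B̃_{x_1} b̃_1)‖_1 ≤ (1+Δ)^t δ_1 + (1+Δ)^t − 1, where B̃_x = (Û^T O) A_x (Û^T O)^{-1} and b̃_1 = (Û^T O)π. -/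
open Matrix

/-- Vector 1-norm. -/
def l1norm {m : ℕ} (v : Fin m → ℝ) : ℝ := ∑ i, |v i|

/-- Operator norm induced by the vector 1-norm (max column sum). -/
noncomputable def opL1 {m : ℕ} (M : Matrix (Fin m) (Fin m) ℝ) : ℝ :=
  ⨆ j : Fin m, ∑ i, |M i j|

/-!
Conjugating by `S = Ûᵀ O` turns the estimated operators into `C_x = S⁻¹ B̂_x S` and the
exact ones into the HMM operators `A_x`, so the quantity to bound is
`Σ_{xs} ‖C_{xs} b - A_{xs} π‖₁` with `b = S⁻¹ b̂₁`. Peeling off the first letter,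
`C_x u - A_x w = A_x (u - w) + (C_x - A_x)(u - w) + (C_x - A_x) w`,
and since the `A_x` are jointly mass-preserving (`Σ_x ‖A_x v‖₁ ≤ ‖v‖₁`) one step costs
`Σ_x ‖C_x u - A_x w‖₁ ≤ (1 + Δ)‖u - w‖₁ + Δ‖w‖₁`. Induction on the word length gives
`(1 + Δ)^t ‖b - π‖₁ + ((1 + Δ)^t - 1)‖π‖₁`, and `‖π‖₁ = 1`.
-/

section L1

variable {m : ℕ}

lemma l1norm_add_le (u v : Fin m → ℝ) : l1norm (u + v) ≤ l1norm u + l1norm v := by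
  simp only [l1norm, Pi.add_apply, ← Finset.sum_add_distrib]
  exact Finset.sum_le_sum fun i _ => abs_add_le _ _

lemma l1norm_mulVec_le_sum (M : Matrix (Fin m) (Fin m) ℝ) (w : Fin m → ℝ) :
    l1norm (M *ᵥ w) ≤ ∑ j, (∑ i, |M i j|) * |w j| :=
  calc l1norm (M *ᵥ w) = ∑ i, |∑ j, M i j * w j| := rfl
    _ ≤ ∑ i, ∑ j, |M i j| * |w j| := by
        refine Finset.sum_le_sum fun i _ => ?_
        simpa only [abs_mul] using Finset.abs_sum_le_sum_abs (fun j => M i j * w j) _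
    _ = ∑ j, (∑ i, |M i j|) * |w j| := by
        rw [Finset.sum_comm]
        simp only [Finset.sum_mul]

lemma sum_abs_le_opL1 (M : Matrix (Fin m) (Fin m) ℝ) (j : Fin m) :
    ∑ i, |M i j| ≤ opL1 M :=
  le_ciSup (f := fun j => ∑ i, |M i j|) (Set.finite_range _).bddAbove j

lemma opL1_nonneg (M : Matrix (Fin m) (Fin m) ℝ) : 0 ≤ opL1 M :=
  Real.iSup_nonneg fun _ => Finset.sum_nonneg fun _ _ => abs_nonneg _

lemma l1norm_mulVec_le_opL1_mul (M : Matrix (Fin m) (Fin m) ℝ) (w : Fin m → ℝ) :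
    l1norm (M *ᵥ w) ≤ opL1 M * l1norm w :=
  calc l1norm (M *ᵥ w) ≤ ∑ j, (∑ i, |M i j|) * |w j| := l1norm_mulVec_le_sum M w
    _ ≤ ∑ j, opL1 M * |w j| := by
        gcongr with j
        exact sum_abs_le_opL1 M j
    _ = opL1 M * l1norm w := (Finset.mul_sum ..).symm

lemma l1norm_of_nonneg_of_sum_eq_one {p : Fin m → ℝ} (hp : ∀ i, 0 ≤ p i)
    (hsum : ∑ i, p i = 1) : l1norm p = 1 := by
  simp only [l1norm, abs_of_nonneg (hp _), hsum]

lemma sum_l1norm_mulVec_diagonal_le {ι : Type*} [Fintype ι]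
    (T : Matrix (Fin m) (Fin m) ℝ) (O : ι → Fin m → ℝ)
    (hTnn : ∀ i j, 0 ≤ T i j) (hTcol : ∀ j, ∑ i, T i j = 1)
    (hOnn : ∀ x j, 0 ≤ O x j) (hOcol : ∀ j, ∑ x, O x j = 1) (w : Fin m → ℝ) :
    ∑ x, l1norm ((T * diagonal (O x)) *ᵥ w) ≤ l1norm w :=
  calc ∑ x, l1norm ((T * diagonal (O x)) *ᵥ w)
      ≤ ∑ x, ∑ j, (∑ i, |(T * diagonal (O x)) i j|) * |w j| :=
        Finset.sum_le_sum fun x _ => l1norm_mulVec_le_sum _ w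
    _ = ∑ j, (∑ x, O x j) * |w j| := by
        simp only [mul_diagonal, abs_mul, abs_of_nonneg (hTnn _ _), abs_of_nonneg (hOnn _ _),
          ← Finset.sum_mul, hTcol, one_mul]
        rw [Finset.sum_comm]
        simp only [Finset.sum_mul]
    _ = l1norm w := by simp only [hOcol, one_mul, l1norm]

end L1

section Words

variable {ι n R : Type*} [Fintype n] [NonUnitalSemiring R]

/-- `evalWord M xs v = M (xs (t-1)) *ᵥ ⋯ *ᵥ M (xs 0) *ᵥ v`. -/
def evalWord {t : ℕ} (M : ι → Matrix n n R) (xs : Fin t → ι) (v : n → R) : n → R :=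
  (List.ofFn xs).foldl (fun v y => M y *ᵥ v) v

lemma evalWord_cons {t : ℕ} (M : ι → Matrix n n R) (x : ι) (xs : Fin t → ι) (v : n → R) :
    evalWord M (Fin.cons x xs : Fin (t + 1) → ι) v = evalWord M xs (M x *ᵥ v) := by
  simp [evalWord, List.ofFn_succ]

lemma mulVec_evalWord_of_mul_eq {t : ℕ} (P : Matrix n n R) (M N : ι → Matrix n n R)
    (h : ∀ y, P * M y = N y * P) (xs : Fin t → ι) (v : n → R) :
    P *ᵥ evalWord M xs v = evalWord N xs (P *ᵥ v) := by
  unfold evalWord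
  induction List.ofFn xs generalizing v with
  | nil => rfl
  | cons y l ih => simp only [List.foldl_cons, ih, mulVec_mulVec, h]

end Words

lemma Fin.sum_univ_fun_cons {ι M : Type*} [Fintype ι] [AddCommMonoid M] {t : ℕ}
    (f : (Fin (t + 1) → ι) → M) :
    ∑ xs, f xs = ∑ x, ∑ xs : Fin t → ι, f (Fin.cons x xs) := by
  rw [← (Fin.consEquiv fun _ => ι).sum_comp, Fintype.sum_prod_type]
  rfl

section Perturbation

variable {m : ℕ} {ι : Type*} [Fintype ι] (A C : ι → Matrix (Fin m) (Fin m) ℝ) (D : ι → ℝ)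

lemma sum_l1norm_mulVec_sub_le
    (hA : ∀ w, ∑ y, l1norm (A y *ᵥ w) ≤ l1norm w)
    (hCA : ∀ y w, l1norm ((C y - A y) *ᵥ w) ≤ D y * l1norm w) (u w : Fin m → ℝ) :
    ∑ x, l1norm (C x *ᵥ u - A x *ᵥ w)
      ≤ (1 + ∑ y, D y) * l1norm (u - w) + (∑ y, D y) * l1norm w := by
  have hsplit : ∀ x, C x *ᵥ u - A x *ᵥ w
      = (A x *ᵥ (u - w) + (C x - A x) *ᵥ (u - w)) + (C x - A x) *ᵥ w := fun x => by
    simp only [sub_mulVec, mulVec_sub]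
    abel
  calc ∑ x, l1norm (C x *ᵥ u - A x *ᵥ w)
      ≤ ∑ x, (l1norm (A x *ᵥ (u - w)) + D x * l1norm (u - w) + D x * l1norm w) := by
        gcongr with x
        rw [hsplit]
        refine (l1norm_add_le _ _).trans (add_le_add ?_ (hCA x w))
        exact (l1norm_add_le _ _).trans (add_le_add_right (hCA x _) _)
    _ = ∑ x, l1norm (A x *ᵥ (u - w)) + (∑ y, D y) * l1norm (u - w)
          + (∑ y, D y) * l1norm w := by
        simp only [Finset.sum_add_distrib, Finset.sum_mul]
    _ ≤ _ := by linarith [hA (u - w)]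

theorem sum_l1norm_evalWord_sub_le (hD : ∀ y, 0 ≤ D y)
    (hA : ∀ w, ∑ y, l1norm (A y *ᵥ w) ≤ l1norm w)
    (hCA : ∀ y w, l1norm ((C y - A y) *ᵥ w) ≤ D y * l1norm w) (t : ℕ) (u w : Fin m → ℝ) :
    ∑ xs : Fin t → ι, l1norm (evalWord C xs u - evalWord A xs w)
      ≤ (1 + ∑ y, D y) ^ t * l1norm (u - w) + ((1 + ∑ y, D y) ^ t - 1) * l1norm w := by
  set Δ := ∑ y, D y
  have hΔ : 0 ≤ Δ := Finset.sum_nonneg fun y _ => hD y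
  induction t generalizing u w with
  | zero => simp [evalWord]
  | succ t ih =>
    have hpow : 1 ≤ (1 + Δ) ^ t := one_le_pow₀ (by linarith)
    calc ∑ xs : Fin (t + 1) → ι, l1norm (evalWord C xs u - evalWord A xs w)
        = ∑ x, ∑ xs : Fin t → ι,
            l1norm (evalWord C xs (C x *ᵥ u) - evalWord A xs (A x *ᵥ w)) := by
          simp only [Fin.sum_univ_fun_cons, evalWord_cons]
      _ ≤ ∑ x, ((1 + Δ) ^ t * l1norm (C x *ᵥ u - A x *ᵥ w)
            + ((1 + Δ) ^ t - 1) * l1norm (A x *ᵥ w)) := Finset.sum_le_sum fun x _ => ih _ _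
      _ = (1 + Δ) ^ t * ∑ x, l1norm (C x *ᵥ u - A x *ᵥ w)
            + ((1 + Δ) ^ t - 1) * ∑ x, l1norm (A x *ᵥ w) := by
          simp only [Finset.sum_add_distrib, Finset.mul_sum]
      _ ≤ (1 + Δ) ^ t * ((1 + Δ) * l1norm (u - w) + Δ * l1norm w)
            + ((1 + Δ) ^ t - 1) * l1norm w := by
          have hstep := sum_l1norm_mulVec_sub_le A C D hA hCA u w
          exact add_le_add (mul_le_mul_of_nonneg_left hstep (by positivity))
            (mul_le_mul_of_nonneg_left (hA w) (by linarith))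
      _ = _ := by ring

end Perturbation

theorem hmm_error_accumulation_general (m n t : ℕ)
    (T : Matrix (Fin m) (Fin m) ℝ) (O : Matrix (Fin n) (Fin m) ℝ) (π : Fin m → ℝ)
    (hTnn : ∀ i j, 0 ≤ T i j) (hTcol : ∀ j, ∑ i, T i j = 1)
    (hOnn : ∀ x j, 0 ≤ O x j) (hOcol : ∀ j, ∑ x, O x j = 1)
    (hπnn : ∀ i, 0 ≤ π i) (hπsum : ∑ i, π i = 1)
    (A : Fin n → Matrix (Fin m) (Fin m) ℝ)
    (hA : ∀ y, A y = T * Matrix.diagonal (fun i => O y i))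
    (Uhat : Matrix (Fin n) (Fin m) ℝ) (hU : IsUnit (Uhatᵀ * O))
    (Bhat : Fin n → Matrix (Fin m) (Fin m) ℝ) (b1hat : Fin m → ℝ)
    (Btil : Fin n → Matrix (Fin m) (Fin m) ℝ)
    (hBtil : ∀ y, Btil y = (Uhatᵀ * O) * A y * (Uhatᵀ * O)⁻¹)
    (b1til : Fin m → ℝ) (hb1til : b1til = (Uhatᵀ * O).mulVec π)
    (Δx : Fin n → ℝ)
    (hΔx : ∀ y, Δx y = opL1 ((Uhatᵀ * O)⁻¹ * Bhat y * (Uhatᵀ * O) - A y))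
    (Δ : ℝ) (hΔ : Δ = ∑ y, Δx y)
    (δ₁ : ℝ) (hδ₁ : δ₁ = l1norm (((Uhatᵀ * O)⁻¹).mulVec b1hat - π)) :
    ∑ xs : Fin t → Fin n,
        l1norm (((Uhatᵀ * O)⁻¹).mulVec
          ((List.ofFn xs).foldl (fun v y => (Bhat y).mulVec v) b1hat
            - (List.ofFn xs).foldl (fun v y => (Btil y).mulVec v) b1til))
      ≤ (1 + Δ) ^ t * δ₁ + (1 + Δ) ^ t - 1 := by
  set S := Uhatᵀ * O
  have hdet : IsUnit S.det := (isUnit_iff_isUnit_det S).mp hU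
  set C : Fin n → Matrix (Fin m) (Fin m) ℝ := fun y => S⁻¹ * Bhat y * S
  have hBhat (y) : S⁻¹ * Bhat y = C y * S⁻¹ := by
    simp only [C, Matrix.mul_assoc, mul_nonsing_inv S hdet, Matrix.mul_one]
  have hBtil' (y) : S⁻¹ * Btil y = A y * S⁻¹ := by
    simp only [hBtil, ← Matrix.mul_assoc, nonsing_inv_mul S hdet, Matrix.one_mul]
  have hb1 : S⁻¹ *ᵥ b1til = π := by
    rw [hb1til, mulVec_mulVec, nonsing_inv_mul S hdet, one_mulVec]
  have hconj (xs : Fin t → Fin n) : S⁻¹ *ᵥ (evalWord Bhat xs b1hat - evalWord Btil xs b1til)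
      = evalWord C xs (S⁻¹ *ᵥ b1hat) - evalWord A xs π := by
    rw [mulVec_sub, mulVec_evalWord_of_mul_eq _ _ _ hBhat,
      mulVec_evalWord_of_mul_eq _ _ _ hBtil', hb1]
  have hCA (y) (w : Fin m → ℝ) : l1norm ((C y - A y) *ᵥ w) ≤ Δx y * l1norm w :=
    hΔx y ▸ l1norm_mulVec_le_opL1_mul _ w
  have hmass (w : Fin m → ℝ) : ∑ y, l1norm (A y *ᵥ w) ≤ l1norm w := by
    simpa only [hA] using sum_l1norm_mulVec_diagonal_le T O hTnn hTcol hOnn hOcol w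
  have key := sum_l1norm_evalWord_sub_le A C Δx (fun y => hΔx y ▸ opL1_nonneg _) hmass hCA t
    (S⁻¹ *ᵥ b1hat) π
  rw [l1norm_of_nonneg_of_sum_eq_one hπnn hπsum, ← hΔ, ← hδ₁] at key
  change ∑ xs, l1norm (S⁻¹ *ᵥ (evalWord Bhat xs b1hat - evalWord Btil xs b1til)) ≤ _
  simp only [hconj]
  linarith

/-- error accumulation: with `Ûᵀ O` invertible, parameter errors
`Δ_x = ‖(Ûᵀ O)⁻¹ B̂_x (Ûᵀ O) − A_x‖₁`, `Δ = Σ_x Δ_x`, `δ₁ = ‖(Ûᵀ O)⁻¹ b̂₁ − π‖₁`, for any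
`t ≥ 1`:
`Σ_{x_1,…,x_t} ‖(Ûᵀ O)⁻¹ (B̂_{x_t}⋯B̂_{x_1} b̂₁ − B̃_{x_t}⋯B̃_{x_1} b̃₁)‖₁
  ≤ (1+Δ)^t δ₁ + (1+Δ)^t − 1`,
where `B̃_x = (Ûᵀ O) A_x (Ûᵀ O)⁻¹`, `b̃₁ = (Ûᵀ O) π`, and `A_x = T diag(O_{x,·})` are the
true HMM operators (`T`, `O` column-stochastic, `π` a probability vector). -/
theorem hmm_error_accumulation (m n t : ℕ) (hm : 0 < m) (ht : 1 ≤ t)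
    (T : Matrix (Fin m) (Fin m) ℝ) (O : Matrix (Fin n) (Fin m) ℝ) (π : Fin m → ℝ)
    (hTnn : ∀ i j, 0 ≤ T i j) (hTcol : ∀ j, ∑ i, T i j = 1)
    (hOnn : ∀ x j, 0 ≤ O x j) (hOcol : ∀ j, ∑ x, O x j = 1)
    (hπnn : ∀ i, 0 ≤ π i) (hπsum : ∑ i, π i = 1)
    (A : Fin n → Matrix (Fin m) (Fin m) ℝ)
    (hA : ∀ y, A y = T * Matrix.diagonal (fun i => O y i))
    (Uhat : Matrix (Fin n) (Fin m) ℝ) (hU : IsUnit (Uhatᵀ * O))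
    (Bhat : Fin n → Matrix (Fin m) (Fin m) ℝ) (b1hat : Fin m → ℝ)
    (Btil : Fin n → Matrix (Fin m) (Fin m) ℝ)
    (hBtil : ∀ y, Btil y = (Uhatᵀ * O) * A y * (Uhatᵀ * O)⁻¹)
    (b1til : Fin m → ℝ) (hb1til : b1til = (Uhatᵀ * O).mulVec π)
    (Δx : Fin n → ℝ)
    (hΔx : ∀ y, Δx y = opL1 ((Uhatᵀ * O)⁻¹ * Bhat y * (Uhatᵀ * O) - A y))
    (Δ : ℝ) (hΔ : Δ = ∑ y, Δx y)
    (δ₁ : ℝ) (hδ₁ : δ₁ = l1norm (((Uhatᵀ * O)⁻¹).mulVec b1hat - π)) :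
    ∑ xs : Fin t → Fin n,
        l1norm (((Uhatᵀ * O)⁻¹).mulVec
          ((List.ofFn xs).foldl (fun v y => (Bhat y).mulVec v) b1hat
            - (List.ofFn xs).foldl (fun v y => (Btil y).mulVec v) b1til))
      ≤ (1 + Δ) ^ t * δ₁ + (1 + Δ) ^ t - 1 :=
  hmm_error_accumulation_general m n t T O π hTnn hTcol hOnn hOcol hπnn hπsum A hA Uhat hU Bhat
    b1hat Btil hBtil b1til hb1til Δx hΔx Δ hΔ δ₁ hδ₁
end

section
/- Let a and b be probability vectors in R^m. If there exists c < 1/2 such that b_i > c for all i, then KL(a‖b) = Σ_i a_i ln(a_i/b_i) ≤ ‖a − b‖_1 · ln(1/c). -/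
/-!
Only the coordinates with `a i > b i` contribute positively, and since `∑ (a i - b i) = 0`
their total excess is half of `‖a - b‖₁`. So it suffices to show
`a log (a / b) ≤ 2 (a - b) log (1 / c)` whenever `c ≤ b ≤ a ≤ 1`. The difference of the two
sides is convex in `b` and vanishes at `b = a`; at `b = c` it is convex in `a`, vanishing at
`a = c` and equal to `(2c - 1) log (1 / c) ≤ 0` at `a = 1`. The maximum principle for convex
functions on an interval does the rest.
-/

open Real Set

lemma ConvexOn.add_mul_const {s : Set ℝ} {f : ℝ → ℝ} (hf : ConvexOn ℝ s f) (K : ℝ) :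
    ConvexOn ℝ s (fun x => f x + x * K) :=
  hf.add ((LinearMap.mulRight ℝ K).convexOn hf.1)

lemma mul_log_div_bound_le_two_mul_sub_mul_log_one_div {a c : ℝ} (hc0 : 0 < c) (hc : c ≤ 1 / 2)
    (hca : c ≤ a) (ha1 : a ≤ 1) : a * log (a / c) ≤ 2 * (a - c) * log (1 / c) := by
  have hL : 0 ≤ log (1 / c) := log_nonneg (by rw [le_div_iff₀ hc0]; linarith)
  have hlog_c : log c = -log (1 / c) := by rw [one_div, log_inv, neg_neg]
  have hmax := (convexOn_mul_log.add_mul_const (-log (1 / c))).le_max_of_mem_Icc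
    (mem_Ici.2 hc0.le) (mem_Ici.2 zero_le_one) ⟨hca, ha1⟩
  have hendpoints : 1 * log 1 + 1 * -log (1 / c) ≤ c * log c + c * -log (1 / c) := by
    rw [log_one, hlog_c]; nlinarith
  rw [max_eq_left hendpoints, hlog_c] at hmax
  rw [log_div (by linarith) hc0.ne', hlog_c]
  linarith

lemma mul_log_div_le_two_mul_sub_mul_log_one_div {a b c : ℝ} (hc0 : 0 < c) (hc : c ≤ 1 / 2)
    (hcb : c ≤ b) (hba : b ≤ a) (ha1 : a ≤ 1) :
    a * log (a / b) ≤ 2 * (a - b) * log (1 / c) := by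
  have hb0 : 0 < b := hc0.trans_le hcb
  have ha0 : 0 < a := hb0.trans_le hba
  have hconv : ConvexOn ℝ (Ioi 0) (fun x => -(a * log x) + x * (2 * log (1 / c))) :=
    (strictConcaveOn_log_Ioi.concaveOn.smul ha0.le).neg.add_mul_const _
  have hmax := hconv.le_max_of_mem_Icc (mem_Ioi.2 hc0) (mem_Ioi.2 ha0) ⟨hcb, hba⟩
  have hendpoints :
      -(a * log c) + c * (2 * log (1 / c)) ≤ -(a * log a) + a * (2 * log (1 / c)) := by
    have := mul_log_div_bound_le_two_mul_sub_mul_log_one_div hc0 hc (hcb.trans hba) ha1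
    rw [log_div ha0.ne' hc0.ne'] at this
    linarith
  rw [max_eq_right hendpoints] at hmax
  rw [log_div ha0.ne' hb0.ne']
  linarith

lemma mul_log_div_le_abs_sub_add_sub_mul_log_one_div {a b c : ℝ} (hc0 : 0 < c) (hc : c ≤ 1 / 2)
    (hcb : c ≤ b) (ha0 : 0 ≤ a) (ha1 : a ≤ 1) :
    a * log (a / b) ≤ (|a - b| + (a - b)) * log (1 / c) := by
  rcases le_total a b with hab | hba
  · rw [abs_of_nonpos (sub_nonpos.2 hab), neg_add_cancel, zero_mul]
    exact mul_nonpos_of_nonneg_of_nonpos ha0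
      (log_nonpos (div_nonneg ha0 (hc0.le.trans hcb)) (div_le_one_of_le₀ hab (hc0.le.trans hcb)))
  · rw [abs_of_nonneg (sub_nonneg.2 hba), ← two_mul]
    exact mul_log_div_le_two_mul_sub_mul_log_one_div hc0 hc hcb hba ha1

theorem kl_le_l1_log_general (m : ℕ) (a b : Fin m → ℝ) (c : ℝ)
    (hann : ∀ i, 0 ≤ a i) (hasum : ∑ i, a i = 1)
    (hbsum : ∑ i, b i = 1)
    (hc0 : 0 < c) (hc : c < 1 / 2) (hb : ∀ i, c < b i) :
    ∑ i, a i * Real.log (a i / b i) ≤ (∑ i, |a i - b i|) * Real.log (1 / c) := by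
  have ha1 : ∀ i, a i ≤ 1 := fun i =>
    hasum ▸ Finset.single_le_sum (fun j _ => hann j) (Finset.mem_univ i)
  have hsum_sub : ∑ i, (a i - b i) = 0 := by
    rw [Finset.sum_sub_distrib, hasum, hbsum, sub_self]
  calc ∑ i, a i * log (a i / b i)
      ≤ ∑ i, (|a i - b i| + (a i - b i)) * log (1 / c) :=
        Finset.sum_le_sum fun i _ => mul_log_div_le_abs_sub_add_sub_mul_log_one_div hc0 hc.le
          (hb i).le (hann i) (ha1 i)
    _ = (∑ i, |a i - b i|) * log (1 / c) := by
        rw [← Finset.sum_mul, Finset.sum_add_distrib, hsum_sub, add_zero]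

/-- for probability vectors `a, b ∈ ℝ^m`, if `0 < c < 1/2` and `b_i > c` for
all `i`, then `KL(a‖b) = Σ_i a_i ln(a_i/b_i) ≤ ‖a − b‖₁ · ln(1/c)` (with the convention
`0 · ln 0 = 0`, which holds automatically since each term vanishes when `a_i = 0`). -/
theorem kl_le_l1_log (m : ℕ) (a b : Fin m → ℝ) (c : ℝ)
    (hann : ∀ i, 0 ≤ a i) (hasum : ∑ i, a i = 1)
    (hbnn : ∀ i, 0 ≤ b i) (hbsum : ∑ i, b i = 1)
    (hc0 : 0 < c) (hc : c < 1 / 2) (hb : ∀ i, c < b i) :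
    ∑ i, a i * Real.log (a i / b i) ≤ (∑ i, |a i - b i|) * Real.log (1 / c) :=
  kl_le_l1_log_general m a b c hann hasum hbsum hc0 hc hb
end
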